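/- arXiv:2001.03079 — 2 statements merged into one kernel-verified Lean document; each statement's English description precedes it below -/
import Mathlib

section
/- Let z, w be in the upper half-plane H with z ≠ w, and let x ∈ ℝ. Then Re[(2/(z − x) − conj(2/(w − x)))/(z − conj(w))] − Re[(2/(z − x) − 2/(w − x))/(z − w)] = − Im(2/(z − x)) · Im(2/(w − x)). -/
/-! Both difference quotients of the Loewner field `2/(· - x)` factor as `-(2/(z-x)) · (2/(v-x)) / 2`
(with `v = w` and `v = conj w`), so the left side is `-(Re(a·conj b) - Re(a·b))/2` for
`a = 2/(z-x)`, `b = 2/(w-x)`, and `Re(a·conj b) - Re(a·b) = 2 Im a Im b`. -/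

open ComplexConjugate

theorem two_div_sub_sub_two_div_sub_div_sub {K : Type*} [Field K] {z w x : K}
    (hz : z - x ≠ 0) (hw : w - x ≠ 0) (hzw : z ≠ w) :
    (2 / (z - x) - 2 / (w - x)) / (z - w) = -(2 / (z - x) * (2 / (w - x))) / 2 := by
  have hzw' : z - w ≠ 0 := sub_ne_zero.mpr hzw
  field_simp
  ring

namespace Complex

theorem re_mul_conj_sub_re_mul (a b : ℂ) : (a * conj b).re - (a * b).re = 2 * a.im * b.im := by
  simp only [mul_re, conj_re, conj_im]
  ring

theorem conj_two_div_sub_ofReal (w : ℂ) (x : ℝ) :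
    conj (2 / (w - x)) = 2 / (conj w - x) := by
  rw [map_div₀, map_sub, conj_ofReal, map_ofNat]

end Complex

open Complex in
theorem green_derivative_identity_H (z w : ℂ) (hz : 0 < z.im) (hw : 0 < w.im)
    (hzw : z ≠ w) (x : ℝ) :
    ((2 / (z - (x : ℂ)) - (starRingEnd ℂ) (2 / (w - (x : ℂ)))) /
        (z - (starRingEnd ℂ) w)).re -
      ((2 / (z - (x : ℂ)) - 2 / (w - (x : ℂ))) / (z - w)).re
    = -((2 / (z - (x : ℂ))).im * (2 / (w - (x : ℂ))).im) := by
  have hzx : z - x ≠ 0 := ne_of_apply_ne im (by simpa using hz.ne')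
  have hwx : w - x ≠ 0 := ne_of_apply_ne im (by simpa using hw.ne')
  have hcwx : conj w - x ≠ 0 := ne_of_apply_ne im (by simpa using hw.ne')
  have hzcw : z ≠ conj w := fun h => by
    linarith [congrArg im h, conj_im w]
  rw [conj_two_div_sub_ofReal, two_div_sub_sub_two_div_sub_div_sub hzx hcwx hzcw,
    two_div_sub_sub_two_div_sub_div_sub hzx hwx hzw, ← conj_two_div_sub_ofReal]
  have hre := re_mul_conj_sub_re_mul (2 / (z - x)) (2 / (w - x))
  simp only [div_ofNat_re, neg_re]
  linarith
end

section
/- Let z(t) and w(t) be differentiable curves in the upper half-plane H with z(t) ≠ w(t) for all t, and let x : [0,T] → ℝ be continuous, satisfying z'(t) = 2/(z(t) − x(t)) and w'(t) = 2/(w(t) − x(t)). Then the function t ↦ log|(z(t) − conj(w(t)))/(z(t) − w(t))| is differentiable with derivative −Im(2/(z(t) − x(t))) · Im(2/(w(t) − x(t))); in particular it is non-increasing. -/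
open Set

lemma hasDerivAt_log_abs {u : ℝ → ℂ} {u' : ℂ} {t : ℝ}
    (hu : HasDerivAt u u' t) (h0 : u t ≠ 0) :
    HasDerivAt (fun s => Real.log ‖u s‖) ((u' / u t).re) t := by
  have hre : HasDerivAt (fun s => (u s).re) u'.re t :=
    (Complex.reCLM.hasFDerivAt.comp_hasDerivAt t hu)
  have him : HasDerivAt (fun s => (u s).im) u'.im t :=
    (Complex.imCLM.hasFDerivAt.comp_hasDerivAt t hu)
  have hns : HasDerivAt (fun s => Complex.normSq (u s))
      (u'.re * (u t).re + (u t).re * u'.re + (u'.im * (u t).im + (u t).im * u'.im)) t := by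
    refine ((hre.mul hre).add (him.mul him)).congr_of_eventuallyEq
      (Filter.Eventually.of_forall fun s => ?_)
    simp [Complex.normSq_apply]
  have hne : Complex.normSq (u t) ≠ 0 := by
    simpa [Complex.normSq_eq_zero] using h0
  have hlog := (Real.hasDerivAt_log hne).comp t hns
  have heq : (fun s => Real.log ‖u s‖)
      = fun s => Real.log (Complex.normSq (u s)) / 2 := by
    funext s
    rw [Complex.norm_def, Real.log_sqrt (Complex.normSq_nonneg _)]
  rw [heq]
  refine (hlog.div_const 2).congr_deriv ?_
  rw [Complex.div_re]
  field_simp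
  ring

lemma key_identity (a b : ℂ) (ha : a ≠ 0) (hb : b ≠ 0)
    (hab : a - b ≠ 0) (hab' : a - (starRingEnd ℂ) b ≠ 0) :
    ((2/a - (starRingEnd ℂ) (2/b)) / (a - (starRingEnd ℂ) b)).re
      - ((2/a - 2/b) / (a - b)).re = -((2/a).im * (2/b).im) := by
  have hb' : (starRingEnd ℂ) b ≠ 0 := by simpa using hb
  have h1 : (2/a - 2/b) / (a - b) = -((2/a) * (2/b)) / 2 := by
    field_simp
    ring
  have h2 : (2/a - (starRingEnd ℂ) (2/b)) / (a - (starRingEnd ℂ) b)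
      = -((2/a) * (starRingEnd ℂ) (2/b)) / 2 := by
    have hc2 : (starRingEnd ℂ) (2:ℂ) = 2 := map_ofNat _ 2
    rw [map_div₀, hc2]
    field_simp
    ring
  rw [h1, h2]
  set c := 2/a
  set d := 2/b
  have : ((starRingEnd ℂ) d).im = -d.im := Complex.conj_im d
  have hre : ((starRingEnd ℂ) d).re = d.re := Complex.conj_re d
  simp only [Complex.div_re, Complex.neg_re, Complex.neg_im, Complex.mul_re, Complex.mul_im,
    this, hre]
  norm_num [Complex.normSq]
  ring

theorem green_decay_along_loewner_flow (T : ℝ) (hT : 0 ≤ T)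
    (z w : ℝ → ℂ) (x : ℝ → ℝ) (hx : ContinuousOn x (Icc 0 T))
    (hz : ∀ t ∈ Icc 0 T, 0 < (z t).im) (hw : ∀ t ∈ Icc 0 T, 0 < (w t).im)
    (hzw : ∀ t ∈ Icc 0 T, z t ≠ w t)
    (hz' : ∀ t ∈ Icc 0 T, HasDerivAt z (2 / (z t - (x t : ℂ))) t)
    (hw' : ∀ t ∈ Icc 0 T, HasDerivAt w (2 / (w t - (x t : ℂ))) t) :
    (∀ t ∈ Icc 0 T,
      HasDerivAt (fun s => Real.log (‖
          ((z s - (starRingEnd ℂ) (w s)) / (z s - w s))‖))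
        (-((2 / (z t - (x t : ℂ))).im * (2 / (w t - (x t : ℂ))).im)) t) ∧
    AntitoneOn (fun s => Real.log (‖
        ((z s - (starRingEnd ℂ) (w s)) / (z s - w s))‖)) (Icc 0 T) := by
  have main : ∀ t ∈ Icc 0 T,
      HasDerivAt (fun s => Real.log (‖
          ((z s - (starRingEnd ℂ) (w s)) / (z s - w s))‖))
        (-((2 / (z t - (x t : ℂ))).im * (2 / (w t - (x t : ℂ))).im)) t := by
    intro t ht
    set a := z t - (x t : ℂ) with ha_def
    set b := w t - (x t : ℂ) with hb_def
    have haim : a.im = (z t).im := by simp [ha_def]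
    have hbim : b.im = (w t).im := by simp [hb_def]
    have ha : a ≠ 0 := by
      intro h
      rw [h] at haim
      simp at haim
      linarith [hz t ht]
    have hb : b ≠ 0 := by
      intro h
      rw [h] at hbim
      simp at hbim
      linarith [hw t ht]
    -- the two curves
    have hu : HasDerivAt (fun s => z s - (starRingEnd ℂ) (w s))
        (2 / a - (starRingEnd ℂ) (2 / b)) t := (hz' t ht).sub (hw' t ht).star
    have hv : HasDerivAt (fun s => z s - w s) (2 / a - 2 / b) t :=
      (hz' t ht).sub (hw' t ht)
    have hucw : z t - (starRingEnd ℂ) (w t) = a - (starRingEnd ℂ) b := by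
      simp [ha_def, hb_def, map_sub, Complex.conj_ofReal]
    have hvab : z t - w t = a - b := by simp [ha_def, hb_def]
    have hu0 : z t - (starRingEnd ℂ) (w t) ≠ 0 := by
      intro h
      have him : (z t - (starRingEnd ℂ) (w t)).im = (z t).im + (w t).im := by
        simp [Complex.sub_im, Complex.conj_im]
      rw [h] at him
      simp at him
      linarith [hz t ht, hw t ht]
    have hv0 : z t - w t ≠ 0 := sub_ne_zero.mpr (hzw t ht)
    have h1 := hasDerivAt_log_abs hu hu0
    have h2 := hasDerivAt_log_abs hv hv0
    have hdiff := h1.sub h2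
    have heq : (fun s => Real.log (‖
          ((z s - (starRingEnd ℂ) (w s)) / (z s - w s))‖))
        =ᶠ[nhds t] fun s => Real.log ‖z s - (starRingEnd ℂ) (w s)‖
          - Real.log ‖z s - w s‖ := by
      have hcu : ContinuousAt (fun s => z s - (starRingEnd ℂ) (w s)) t := hu.continuousAt
      have hcv : ContinuousAt (fun s => z s - w s) t := hv.continuousAt
      filter_upwards [hcu.eventually_ne hu0, hcv.eventually_ne hv0] with s hs1 hs2
      rw [norm_div, Real.log_div (norm_ne_zero_iff.mpr hs1)
        (norm_ne_zero_iff.mpr hs2)]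
    have hfinal := hdiff.congr_of_eventuallyEq heq
    have hval : ((2 / a - (starRingEnd ℂ) (2 / b)) / (z t - (starRingEnd ℂ) (w t))).re
        - ((2 / a - 2 / b) / (z t - w t)).re = -((2 / a).im * (2 / b).im) := by
      rw [hucw, hvab]
      exact key_identity a b ha hb (hvab ▸ hv0) (hucw ▸ hu0)
    rw [hval] at hfinal
    exact hfinal
  refine ⟨main, ?_⟩
  apply antitoneOn_of_deriv_nonpos (convex_Icc 0 T)
  · intro t ht
    exact (main t ht).continuousAt.continuousWithinAt
  · intro t ht
    rw [interior_Icc] at ht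
    exact ((main t (Ioo_subset_Icc_self ht)).differentiableAt).differentiableWithinAt
  · intro t ht
    rw [interior_Icc] at ht
    have ht' := Ioo_subset_Icc_self ht
    rw [(main t ht').deriv]
    have ha : (z t - (x t : ℂ)).im = (z t).im := by simp
    have hb : (w t - (x t : ℂ)).im = (w t).im := by simp
    have hza : (z t - (x t : ℂ)) ≠ 0 := by
      intro h; rw [h] at ha; simp at ha; linarith [hz t ht']
    have hwb : (w t - (x t : ℂ)) ≠ 0 := by
      intro h; rw [h] at hb; simp at hb; linarith [hw t ht']
    have h1 : (2 / (z t - (x t : ℂ))).im < 0 := by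
      rw [Complex.div_im]
      have : Complex.normSq (z t - (x t : ℂ)) > 0 := Complex.normSq_pos.mpr hza
      simp only [ha, Complex.re_ofNat, Complex.im_ofNat, zero_mul, zero_div, zero_sub]
      have := hz t ht'
      have h0 : 2 * (z t).im / Complex.normSq (z t - (x t : ℂ)) > 0 := by positivity
      linarith
    have h2 : (2 / (w t - (x t : ℂ))).im < 0 := by
      rw [Complex.div_im]
      have : Complex.normSq (w t - (x t : ℂ)) > 0 := Complex.normSq_pos.mpr hwb
      simp only [hb, Complex.re_ofNat, Complex.im_ofNat, zero_mul, zero_div, zero_sub]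
      have := hw t ht'
      have h0 : 2 * (w t).im / Complex.normSq (w t - (x t : ℂ)) > 0 := by positivity
      linarith
    nlinarith
end
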